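/- arXiv:1209.2033 — 3 statements merged into one kernel-verified Lean document; each statement's English description precedes it below -/
import Mathlib

section
/- Let V be a 10-element set whose 2-element subsets are colored with 3 colors. Then there is a monochromatic matching of size 3, i.e., three pairwise disjoint 2-subsets of V all of the same color. -/
set_option maxHeartbeats 1000000

set_option linter.unusedSectionVars false

namespace AFLaux

variable {V : Type*} [DecidableEq V]

def Cross (x1 y1 x2 y2 : V) : Prop := x1 ≠ x2 ∧ x1 ≠ y2 ∧ y1 ≠ x2 ∧ y1 ≠ y2

def No3 (E : V → V → Prop) : Prop :=
  ∀ ⦃x1 y1 x2 y2 x3 y3 : V⦄, E x1 y1 → E x2 y2 → E x3 y3 →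
    Cross x1 y1 x2 y2 → Cross x1 y1 x3 y3 → Cross x2 y2 x3 y3 → False

def Covered (E : V → V → Prop) (S X Y : Finset V) : Prop :=
  ∀ ⦃x y : V⦄, E x y → x ∈ S ∨ y ∈ S ∨ (x ∈ X ∧ y ∈ X) ∨ (x ∈ Y ∧ y ∈ Y)

def NK (A B C D u : V) : Prop := u ≠ A ∧ u ≠ B ∧ u ≠ C ∧ u ≠ D

lemma NK.p12 {A B C D u : V} (h : NK A B C D u) : NK B A C D u :=
  ⟨h.2.1, h.1, h.2.2.1, h.2.2.2⟩

lemma NK.p34 {A B C D u : V} (h : NK A B C D u) : NK A B D C u :=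
  ⟨h.1, h.2.1, h.2.2.2, h.2.2.1⟩

lemma NK.pp {A B C D u : V} (h : NK A B C D u) : NK C D A B u :=
  ⟨h.2.2.1, h.2.2.2, h.1, h.2.1⟩

lemma cle2 (a b : V) : ({a,b} : Finset V).card ≤ 2 :=
  le_trans (Finset.card_insert_le _ _) (by simp)

lemma cle3 (a b c : V) : ({a,b,c} : Finset V).card ≤ 3 :=
  le_trans (Finset.card_insert_le _ _) (Nat.add_le_add_right (cle2 b c) 1)

lemma cle4 (a b c d : V) : ({a,b,c,d} : Finset V).card ≤ 4 :=
  le_trans (Finset.card_insert_le _ _) (Nat.add_le_add_right (cle3 b c d) 1)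

lemma cle5 (a b c d e : V) : ({a,b,c,d,e} : Finset V).card ≤ 5 :=
  le_trans (Finset.card_insert_le _ _) (Nat.add_le_add_right (cle4 b c d e) 1)

lemma cover_sym (E : V → V → Prop) (hsym : Symmetric E) (A B C D : V) (S X Y : Finset V)
    (F1 : ∀ ⦃x y⦄, E x y → x = A ∨ x = B ∨ x = C ∨ x = D ∨ y = A ∨ y = B ∨ y = C ∨ y = D)
    (half : ∀ ⦃x y⦄, E x y → (x = A ∨ x = B ∨ x = C ∨ x = D) →
      x ∈ S ∨ y ∈ S ∨ (x ∈ X ∧ y ∈ X) ∨ (x ∈ Y ∧ y ∈ Y)) :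
    Covered E S X Y := by
  intro x y h
  rcases F1 h with h'|h'|h'|h'|h'|h'|h'|h'
  · exact half h (Or.inl h')
  · exact half h (Or.inr (Or.inl h'))
  · exact half h (Or.inr (Or.inr (Or.inl h')))
  · exact half h (Or.inr (Or.inr (Or.inr h')))
  all_goals (have := half (hsym h) (by tauto); tauto)

section Leaves

variable (E : V → V → Prop)

/-- Goal type of all leaves. -/
def KeyGoal : Prop :=
  ∃ S X Y : Finset V, S.card + X.card / 2 + Y.card / 2 ≤ 2 ∧ Covered E S X Y

lemma caseC11
    (hsym : Symmetric E) (hne : ∀ ⦃x y⦄, E x y → x ≠ y) (h3 : No3 E) (A B C D : V)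
    (hAB : A ≠ B) (hAC : A ≠ C) (hAD : A ≠ D) (hBC : B ≠ C) (hBD : B ≠ D) (hCD : C ≠ D)
    (F1 : ∀ ⦃x y⦄, E x y → x = A ∨ x = B ∨ x = C ∨ x = D ∨ y = A ∨ y = B ∨ y = C ∨ y = D)
    (w1 w2 : V) (hw1 : NK A B C D w1) (hw2 : NK A B C D w2) (h12 : w1 ≠ w2)
    (hAw1 : E A w1) (hCw2 : E C w2)
    (hB : ∀ u, NK A B C D u → ¬ E B u) (hD : ∀ u, NK A B C D u → ¬ E D u) :
    KeyGoal E := by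
  obtain ⟨hw1a, hw1b, hw1c, hw1d⟩ := hw1
  obtain ⟨hw2a, hw2b, hw2c, hw2d⟩ := hw2
  have hnBD : ¬ E B D := fun hbd =>
    h3 hAw1 hCw2 hbd ⟨hAC, hw2a.symm, hw1c, h12⟩ ⟨hAB, hAD, hw1b, hw1d⟩
      ⟨hBC.symm, hCD, hw2b, hw2d⟩
  refine ⟨{A, C}, ∅, ∅, by have := cle2 A C; simp; omega,
    cover_sym E hsym A B C D _ _ _ F1 ?_⟩
  intro x y h hx
  obtain hx|hx|hx|hx := hx <;> rw [hx] at h ⊢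
  · exact Or.inl (by simp)
  · by_cases hyA : y = A
    · exact Or.inr (Or.inl (by simp [hyA]))
    by_cases hyC : y = C
    · exact Or.inr (Or.inl (by simp [hyC]))
    by_cases hyB : y = B
    · exact absurd hyB (hne h).symm
    by_cases hyD : y = D
    · rw [hyD] at h; exact absurd h hnBD
    · exact absurd h (hB y ⟨hyA, hyB, hyC, hyD⟩)
  · exact Or.inl (by simp)
  · by_cases hyA : y = A
    · exact Or.inr (Or.inl (by simp [hyA]))
    by_cases hyC : y = C
    · exact Or.inr (Or.inl (by simp [hyC]))
    by_cases hyB : y = B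
    · rw [hyB] at h; exact absurd (hsym h) hnBD
    by_cases hyD : y = D
    · exact absurd hyD (hne h).symm
    · exact absurd h (hD y ⟨hyA, hyB, hyC, hyD⟩)

lemma caseB_both
    (hsym : Symmetric E) (hne : ∀ ⦃x y⦄, E x y → x ≠ y) (h3 : No3 E) (A B C D : V)
    (hAB : A ≠ B) (hAC : A ≠ C) (hAD : A ≠ D) (hBC : B ≠ C) (hBD : B ≠ D) (hCD : C ≠ D)
    (F1 : ∀ ⦃x y⦄, E x y → x = A ∨ x = B ∨ x = C ∨ x = D ∨ y = A ∨ y = B ∨ y = C ∨ y = D)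
    (w w0 : V) (hw : NK A B C D w) (hw0 : NK A B C D w0) (hne0 : w ≠ w0)
    (hAw : E A w)
    (hB : ∀ u, NK A B C D u → ¬ E B u)
    (hCw0 : E C w0) (hDw0 : E D w0)
    (PS : ∀ u, NK A B C D u → E C u ∨ E D u → u = w0) :
    KeyGoal E := by
  obtain ⟨hwa, hwb, hwc, hwd⟩ := hw
  obtain ⟨h0a, h0b, h0c, h0d⟩ := hw0
  have hnBC : ¬ E B C := fun hbc =>
    h3 hAw hDw0 hbc ⟨hAD, h0a.symm, hwd, hne0⟩ ⟨hAB, hAC, hwb, hwc⟩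
      ⟨hBD.symm, hCD.symm, h0b, h0c⟩
  have hnBD : ¬ E B D := fun hbd =>
    h3 hAw hCw0 hbd ⟨hAC, h0a.symm, hwc, hne0⟩ ⟨hAB, hAD, hwb, hwd⟩
      ⟨hBC.symm, hCD, h0b, h0d⟩
  refine ⟨{A}, {C, D, w0}, ∅, by have := cle3 C D w0; simp; omega,
    cover_sym E hsym A B C D _ _ _ F1 ?_⟩
  intro x y h hx
  obtain hx|hx|hx|hx := hx <;> rw [hx] at h ⊢
  · exact Or.inl (by simp)
  · by_cases hyA : y = A
    · exact Or.inr (Or.inl (by simp [hyA]))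
    by_cases hyB : y = B
    · exact absurd hyB (hne h).symm
    by_cases hyC : y = C
    · rw [hyC] at h; exact absurd h hnBC
    by_cases hyD : y = D
    · rw [hyD] at h; exact absurd h hnBD
    · exact absurd h (hB y ⟨hyA, hyB, hyC, hyD⟩)
  · by_cases hyA : y = A
    · exact Or.inr (Or.inl (by simp [hyA]))
    by_cases hyB : y = B
    · rw [hyB] at h; exact absurd (hsym h) hnBC
    by_cases hyC : y = C
    · exact absurd hyC (hne h).symm
    by_cases hyD : y = D
    · exact Or.inr (Or.inr (Or.inl ⟨by simp, by simp [hyD]⟩))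
    · have := PS y ⟨hyA, hyB, hyC, hyD⟩ (Or.inl h)
      exact Or.inr (Or.inr (Or.inl ⟨by simp, by simp [this]⟩))
  · by_cases hyA : y = A
    · exact Or.inr (Or.inl (by simp [hyA]))
    by_cases hyB : y = B
    · rw [hyB] at h; exact absurd (hsym h) hnBD
    by_cases hyC : y = C
    · exact Or.inr (Or.inr (Or.inl ⟨by simp, by simp [hyC]⟩))
    by_cases hyD : y = D
    · exact absurd hyD (hne h).symm
    · have := PS y ⟨hyA, hyB, hyC, hyD⟩ (Or.inr h)
      exact Or.inr (Or.inr (Or.inl ⟨by simp, by simp [this]⟩))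

lemma caseB_none
    (hsym : Symmetric E) (hne : ∀ ⦃x y⦄, E x y → x ≠ y) (h3 : No3 E) (A B C D : V)
    (hAB : A ≠ B) (hAC : A ≠ C) (hAD : A ≠ D) (hBC : B ≠ C) (hBD : B ≠ D) (hCD : C ≠ D)
    (F1 : ∀ ⦃x y⦄, E x y → x = A ∨ x = B ∨ x = C ∨ x = D ∨ y = A ∨ y = B ∨ y = C ∨ y = D)
    (hB : ∀ u, NK A B C D u → ¬ E B u)
    (hC : ∀ u, NK A B C D u → ¬ E C u)
    (hD : ∀ u, NK A B C D u → ¬ E D u) :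
    KeyGoal E := by
  refine ⟨{A}, {B, C, D}, ∅, by have := cle3 B C D; simp; omega,
    cover_sym E hsym A B C D _ _ _ F1 ?_⟩
  intro x y h hx
  have memX : ∀ z, z = B ∨ z = C ∨ z = D → z ∈ ({B, C, D} : Finset V) := by
    intro z hz; rcases hz with rfl|rfl|rfl <;> simp
  obtain hx|hx|hx|hx := hx <;> rw [hx] at h ⊢
  · exact Or.inl (by simp)
  · by_cases hyA : y = A
    · exact Or.inr (Or.inl (by simp [hyA]))
    by_cases hyB : y = B
    · exact absurd hyB (hne h).symm
    by_cases hyC : y = C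
    · exact Or.inr (Or.inr (Or.inl ⟨by simp, memX y (Or.inr (Or.inl hyC))⟩))
    by_cases hyD : y = D
    · exact Or.inr (Or.inr (Or.inl ⟨by simp, memX y (Or.inr (Or.inr hyD))⟩))
    · exact absurd h (hB y ⟨hyA, hyB, hyC, hyD⟩)
  · by_cases hyA : y = A
    · exact Or.inr (Or.inl (by simp [hyA]))
    by_cases hyB : y = B
    · exact Or.inr (Or.inr (Or.inl ⟨by simp, memX y (Or.inl hyB)⟩))
    by_cases hyC : y = C
    · exact absurd hyC (hne h).symm
    by_cases hyD : y = D
    · exact Or.inr (Or.inr (Or.inl ⟨by simp, memX y (Or.inr (Or.inr hyD))⟩))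
    · exact absurd h (hC y ⟨hyA, hyB, hyC, hyD⟩)
  · by_cases hyA : y = A
    · exact Or.inr (Or.inl (by simp [hyA]))
    by_cases hyB : y = B
    · exact Or.inr (Or.inr (Or.inl ⟨by simp, memX y (Or.inl hyB)⟩))
    by_cases hyC : y = C
    · exact Or.inr (Or.inr (Or.inl ⟨by simp, memX y (Or.inr (Or.inl hyC))⟩))
    by_cases hyD : y = D
    · exact absurd hyD (hne h).symm
    · exact absurd h (hD y ⟨hyA, hyB, hyC, hyD⟩)

lemma caseC5
    (hsym : Symmetric E) (hne : ∀ ⦃x y⦄, E x y → x ≠ y) (h3 : No3 E) (A B C D : V)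
    (F1 : ∀ ⦃x y⦄, E x y → x = A ∨ x = B ∨ x = C ∨ x = D ∨ y = A ∨ y = B ∨ y = C ∨ y = D)
    (w : V)
    (PSall : ∀ u, NK A B C D u → (E A u ∨ E B u ∨ E C u ∨ E D u) → u = w) :
    KeyGoal E := by
  refine ⟨∅, {A, B, C, D, w}, ∅, by have := cle5 A B C D w; simp; omega,
    cover_sym E hsym A B C D _ _ _ F1 ?_⟩
  intro x y h hx
  have memX : ∀ z, z = A ∨ z = B ∨ z = C ∨ z = D ∨ z = w → z ∈ ({A,B,C,D,w} : Finset V) := by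
    intro z hz; rcases hz with rfl|rfl|rfl|rfl|rfl <;> simp
  refine Or.inr (Or.inr (Or.inl ⟨memX x (by tauto), ?_⟩))
  by_cases hyA : y = A; · exact memX y (Or.inl hyA)
  by_cases hyB : y = B; · exact memX y (Or.inr (Or.inl hyB))
  by_cases hyC : y = C; · exact memX y (Or.inr (Or.inr (Or.inl hyC)))
  by_cases hyD : y = D; · exact memX y (Or.inr (Or.inr (Or.inr (Or.inl hyD))))
  refine memX y (Or.inr (Or.inr (Or.inr (Or.inr ?_))))
  refine PSall y ⟨hyA, hyB, hyC, hyD⟩ ?_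
  rcases hx with rfl|rfl|rfl|rfl
  · exact Or.inl h
  · exact Or.inr (Or.inl h)
  · exact Or.inr (Or.inr (Or.inl h))
  · exact Or.inr (Or.inr (Or.inr h))

lemma caseC22
    (hsym : Symmetric E) (hne : ∀ ⦃x y⦄, E x y → x ≠ y) (h3 : No3 E) (A B C D : V)
    (hAB : A ≠ B) (hAC : A ≠ C) (hAD : A ≠ D) (hBC : B ≠ C) (hBD : B ≠ D) (hCD : C ≠ D)
    (F1 : ∀ ⦃x y⦄, E x y → x = A ∨ x = B ∨ x = C ∨ x = D ∨ y = A ∨ y = B ∨ y = C ∨ y = D)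
    (w1 w2 : V) (hw1 : NK A B C D w1) (hw2 : NK A B C D w2) (h12 : w1 ≠ w2)
    (hAw1 : E A w1) (hBw1 : E B w1) (hCw2 : E C w2) (hDw2 : E D w2)
    (PSab : ∀ u, NK A B C D u → E A u ∨ E B u → u = w1)
    (PScd : ∀ u, NK A B C D u → E C u ∨ E D u → u = w2) :
    KeyGoal E := by
  obtain ⟨hw1a, hw1b, hw1c, hw1d⟩ := hw1
  obtain ⟨hw2a, hw2b, hw2c, hw2d⟩ := hw2
  have hnAC : ¬ E A C := fun h =>
    h3 hBw1 hDw2 h ⟨hBD, hw2b.symm, hw1d, h12⟩ ⟨hAB.symm, hBC, hw1a, hw1c⟩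
      ⟨hAD.symm, hCD.symm, hw2a, hw2c⟩
  have hnAD : ¬ E A D := fun h =>
    h3 hBw1 hCw2 h ⟨hBC, hw2b.symm, hw1c, h12⟩ ⟨hAB.symm, hBD, hw1a, hw1d⟩
      ⟨hAC.symm, hCD, hw2a, hw2d⟩
  have hnBC : ¬ E B C := fun h =>
    h3 hAw1 hDw2 h ⟨hAD, hw2a.symm, hw1d, h12⟩ ⟨hAB, hAC, hw1b, hw1c⟩
      ⟨hBD.symm, hCD.symm, hw2b, hw2c⟩
  have hnBD : ¬ E B D := fun h =>
    h3 hAw1 hCw2 h ⟨hAC, hw2a.symm, hw1c, h12⟩ ⟨hAB, hAD, hw1b, hw1d⟩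
      ⟨hBC.symm, hCD, hw2b, hw2d⟩
  refine ⟨∅, {A, B, w1}, {C, D, w2},
    by have := cle3 A B w1; have := cle3 C D w2; simp; omega,
    cover_sym E hsym A B C D _ _ _ F1 ?_⟩
  intro x y h hx
  obtain hx|hx|hx|hx := hx <;> rw [hx] at h ⊢
  · by_cases hyB : y = B
    · exact Or.inr (Or.inr (Or.inl ⟨by simp, by simp [hyB]⟩))
    by_cases hyA : y = A
    · exact absurd hyA (hne h).symm
    by_cases hyC : y = C
    · rw [hyC] at h; exact absurd h hnAC
    by_cases hyD : y = D
    · rw [hyD] at h; exact absurd h hnAD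
    · have := PSab y ⟨hyA, hyB, hyC, hyD⟩ (Or.inl h)
      exact Or.inr (Or.inr (Or.inl ⟨by simp, by simp [this]⟩))
  · by_cases hyA : y = A
    · exact Or.inr (Or.inr (Or.inl ⟨by simp, by simp [hyA]⟩))
    by_cases hyB : y = B
    · exact absurd hyB (hne h).symm
    by_cases hyC : y = C
    · rw [hyC] at h; exact absurd h hnBC
    by_cases hyD : y = D
    · rw [hyD] at h; exact absurd h hnBD
    · have := PSab y ⟨hyA, hyB, hyC, hyD⟩ (Or.inr h)
      exact Or.inr (Or.inr (Or.inl ⟨by simp, by simp [this]⟩))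
  · by_cases hyD : y = D
    · exact Or.inr (Or.inr (Or.inr ⟨by simp, by simp [hyD]⟩))
    by_cases hyA : y = A
    · rw [hyA] at h; exact absurd (hsym h) hnAC
    by_cases hyB : y = B
    · rw [hyB] at h; exact absurd (hsym h) hnBC
    by_cases hyC : y = C
    · exact absurd hyC (hne h).symm
    · have := PScd y ⟨hyA, hyB, hyC, hyD⟩ (Or.inl h)
      exact Or.inr (Or.inr (Or.inr ⟨by simp, by simp [this]⟩))
  · by_cases hyC : y = C
    · exact Or.inr (Or.inr (Or.inr ⟨by simp, by simp [hyC]⟩))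
    by_cases hyA : y = A
    · rw [hyA] at h; exact absurd (hsym h) hnAD
    by_cases hyB : y = B
    · rw [hyB] at h; exact absurd (hsym h) hnBD
    by_cases hyD : y = D
    · exact absurd hyD (hne h).symm
    · have := PScd y ⟨hyA, hyB, hyC, hyD⟩ (Or.inr h)
      exact Or.inr (Or.inr (Or.inr ⟨by simp, by simp [this]⟩))

lemma caseC21
    (hsym : Symmetric E) (hne : ∀ ⦃x y⦄, E x y → x ≠ y) (h3 : No3 E) (A B C D : V)
    (hAB : A ≠ B) (hAC : A ≠ C) (hAD : A ≠ D) (hBC : B ≠ C) (hBD : B ≠ D) (hCD : C ≠ D)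
    (F1 : ∀ ⦃x y⦄, E x y → x = A ∨ x = B ∨ x = C ∨ x = D ∨ y = A ∨ y = B ∨ y = C ∨ y = D)
    (w1 w2 : V) (hw1 : NK A B C D w1) (hw2 : NK A B C D w2) (h12 : w1 ≠ w2)
    (hAw1 : E A w1) (hBw1 : E B w1) (hCw2 : E C w2)
    (hD : ∀ u, NK A B C D u → ¬ E D u)
    (PSab : ∀ u, NK A B C D u → E A u ∨ E B u → u = w1) :
    KeyGoal E := by
  obtain ⟨hw1a, hw1b, hw1c, hw1d⟩ := hw1
  obtain ⟨hw2a, hw2b, hw2c, hw2d⟩ := hw2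
  have hnAD : ¬ E A D := fun h =>
    h3 hBw1 hCw2 h ⟨hBC, hw2b.symm, hw1c, h12⟩ ⟨hAB.symm, hBD, hw1a, hw1d⟩
      ⟨hAC.symm, hCD, hw2a, hw2d⟩
  have hnBD : ¬ E B D := fun h =>
    h3 hAw1 hCw2 h ⟨hAC, hw2a.symm, hw1c, h12⟩ ⟨hAB, hAD, hw1b, hw1d⟩
      ⟨hBC.symm, hCD, hw2b, hw2d⟩
  refine ⟨{C}, {A, B, w1}, ∅, by have := cle3 A B w1; simp; omega,
    cover_sym E hsym A B C D _ _ _ F1 ?_⟩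
  intro x y h hx
  obtain hx|hx|hx|hx := hx <;> rw [hx] at h ⊢
  · by_cases hyC : y = C
    · exact Or.inr (Or.inl (by simp [hyC]))
    by_cases hyB : y = B
    · exact Or.inr (Or.inr (Or.inl ⟨by simp, by simp [hyB]⟩))
    by_cases hyA : y = A
    · exact absurd hyA (hne h).symm
    by_cases hyD : y = D
    · rw [hyD] at h; exact absurd h hnAD
    · have := PSab y ⟨hyA, hyB, hyC, hyD⟩ (Or.inl h)
      exact Or.inr (Or.inr (Or.inl ⟨by simp, by simp [this]⟩))
  · by_cases hyC : y = C
    · exact Or.inr (Or.inl (by simp [hyC]))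
    by_cases hyA : y = A
    · exact Or.inr (Or.inr (Or.inl ⟨by simp, by simp [hyA]⟩))
    by_cases hyB : y = B
    · exact absurd hyB (hne h).symm
    by_cases hyD : y = D
    · rw [hyD] at h; exact absurd h hnBD
    · have := PSab y ⟨hyA, hyB, hyC, hyD⟩ (Or.inr h)
      exact Or.inr (Or.inr (Or.inl ⟨by simp, by simp [this]⟩))
  · exact Or.inl (by simp)
  · by_cases hyC : y = C
    · exact Or.inr (Or.inl (by simp [hyC]))
    by_cases hyA : y = A
    · rw [hyA] at h; exact absurd (hsym h) hnAD
    by_cases hyB : y = B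
    · rw [hyB] at h; exact absurd (hsym h) hnBD
    by_cases hyD : y = D
    · exact absurd hyD (hne h).symm
    · exact absurd h (hD y ⟨hyA, hyB, hyC, hyD⟩)

end Leaves

section F1perm
variable (E : V → V → Prop) {A B C D : V}

lemma F1swap12
    (F1 : ∀ ⦃x y⦄, E x y → x = A ∨ x = B ∨ x = C ∨ x = D ∨ y = A ∨ y = B ∨ y = C ∨ y = D) :
    ∀ ⦃x y⦄, E x y → x = B ∨ x = A ∨ x = C ∨ x = D ∨ y = B ∨ y = A ∨ y = C ∨ y = D :=
  fun _ _ h => by have := F1 h; tauto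

lemma F1swap34
    (F1 : ∀ ⦃x y⦄, E x y → x = A ∨ x = B ∨ x = C ∨ x = D ∨ y = A ∨ y = B ∨ y = C ∨ y = D) :
    ∀ ⦃x y⦄, E x y → x = A ∨ x = B ∨ x = D ∨ x = C ∨ y = A ∨ y = B ∨ y = D ∨ y = C :=
  fun _ _ h => by have := F1 h; tauto

lemma F1pp
    (F1 : ∀ ⦃x y⦄, E x y → x = A ∨ x = B ∨ x = C ∨ x = D ∨ y = A ∨ y = B ∨ y = C ∨ y = D) :
    ∀ ⦃x y⦄, E x y → x = C ∨ x = D ∨ x = A ∨ x = B ∨ y = C ∨ y = D ∨ y = A ∨ y = B :=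
  fun _ _ h => by have := F1 h; tauto

end F1perm

section Glue

variable (E : V → V → Prop)

theorem key (hsym : Symmetric E) (hne : ∀ ⦃x y⦄, E x y → x ≠ y) (h3 : No3 E) :
    KeyGoal E := by
  by_cases h1 : ∃ x y, E x y
  swap
  · exact ⟨∅, ∅, ∅, by simp, fun x y hxy => absurd ⟨x, y, hxy⟩ h1⟩
  obtain ⟨a, b, hab⟩ := h1
  by_cases h2 : ∃ c d, E c d ∧ Cross a b c d
  swap
  · refine ⟨{a, b}, ∅, ∅, by have := cle2 a b; simp; omega, ?_⟩
    intro x y hxy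
    by_cases hxa : x = a
    · exact Or.inl (by simp [hxa])
    by_cases hxb : x = b
    · exact Or.inl (by simp [hxb])
    by_cases hya : y = a
    · exact Or.inr (Or.inl (by simp [hya]))
    by_cases hyb : y = b
    · exact Or.inr (Or.inl (by simp [hyb]))
    exact absurd ⟨x, y, hxy, fun e => hxa e.symm, fun e => hya e.symm,
      fun e => hxb e.symm, fun e => hyb e.symm⟩ h2
  obtain ⟨c, d, hcd, hac, had, hbc, hbd⟩ := h2
  have hab' : a ≠ b := hne hab
  have hcd' : c ≠ d := hne hcd
  have F1 : ∀ ⦃x y⦄, E x y → x = a ∨ x = b ∨ x = c ∨ x = d ∨ y = a ∨ y = b ∨ y = c ∨ y = d := by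
    intro x y h
    by_contra hcon
    push_neg at hcon
    obtain ⟨q1, q2, q3, q4, q5, q6, q7, q8⟩ := hcon
    exact h3 hab hcd h ⟨hac, had, hbc, hbd⟩ ⟨q1.symm, q5.symm, q2.symm, q6.symm⟩
      ⟨q3.symm, q7.symm, q4.symm, q8.symm⟩
  have cfab : ∀ ⦃w w'⦄, NK a b c d w → NK a b c d w' → w ≠ w' → E a w → E b w' → False := by
    intro w w' hw hw' hww haw hbw'
    exact h3 haw hbw' hcd ⟨hab', hw'.1.symm, hw.2.1, hww⟩ ⟨hac, had, hw.2.2.1, hw.2.2.2⟩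
      ⟨hbc, hbd, hw'.2.2.1, hw'.2.2.2⟩
  have cfcd : ∀ ⦃w w'⦄, NK a b c d w → NK a b c d w' → w ≠ w' → E c w → E d w' → False := by
    intro w w' hw hw' hww hcw hdw'
    exact h3 hcw hdw' hab ⟨hcd', hw'.2.2.1.symm, hw.2.2.2, hww⟩
      ⟨hac.symm, hbc.symm, hw.1, hw.2.1⟩ ⟨had.symm, hbd.symm, hw'.1, hw'.2.1⟩
  have bigElimAB : (∃ w w', NK a b c d w ∧ NK a b c d w' ∧ w ≠ w' ∧ (E a w ∨ E b w) ∧ (E a w' ∨ E b w')) →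
      ((∃ w w', NK a b c d w ∧ NK a b c d w' ∧ w ≠ w' ∧ E a w ∧ E a w') ∧ (∀ u, NK a b c d u → ¬ E b u)) ∨
      ((∃ w w', NK a b c d w ∧ NK a b c d w' ∧ w ≠ w' ∧ E b w ∧ E b w') ∧ (∀ u, NK a b c d u → ¬ E a u)) := by
    rintro ⟨w, w', hw, hw', hww, hatt, hatt'⟩
    rcases hatt with haw|hbw <;> rcases hatt' with haw'|hbw'
    · refine Or.inl ⟨⟨w, w', hw, hw', hww, haw, haw'⟩, fun u hu hbu => ?_⟩
      by_cases huw : u = w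
      · exact cfab hw' hu (by rw [huw]; exact hww.symm) haw' hbu
      · exact cfab hw hu (fun e => huw e.symm) haw hbu
    · exact (cfab hw hw' hww haw hbw').elim
    · exact (cfab hw' hw hww.symm haw' hbw).elim
    · refine Or.inr ⟨⟨w, w', hw, hw', hww, hbw, hbw'⟩, fun u hu hau => ?_⟩
      by_cases huw : u = w
      · exact cfab hu hw' (by rw [huw]; exact hww) hau hbw'
      · exact cfab hu hw huw hau hbw
  have bigElimCD : (∃ w w', NK a b c d w ∧ NK a b c d w' ∧ w ≠ w' ∧ (E c w ∨ E d w) ∧ (E c w' ∨ E d w')) →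
      ((∃ w w', NK a b c d w ∧ NK a b c d w' ∧ w ≠ w' ∧ E c w ∧ E c w') ∧ (∀ u, NK a b c d u → ¬ E d u)) ∨
      ((∃ w w', NK a b c d w ∧ NK a b c d w' ∧ w ≠ w' ∧ E d w ∧ E d w') ∧ (∀ u, NK a b c d u → ¬ E c u)) := by
    rintro ⟨w, w', hw, hw', hww, hatt, hatt'⟩
    rcases hatt with hcw|hdw <;> rcases hatt' with hcw'|hdw'
    · refine Or.inl ⟨⟨w, w', hw, hw', hww, hcw, hcw'⟩, fun u hu hdu => ?_⟩
      by_cases huw : u = w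
      · exact cfcd hw' hu (by rw [huw]; exact hww.symm) hcw' hdu
      · exact cfcd hw hu (fun e => huw e.symm) hcw hdu
    · exact (cfcd hw hw' hww hcw hdw').elim
    · exact (cfcd hw' hw hww.symm hcw' hdw).elim
    · refine Or.inr ⟨⟨w, w', hw, hw', hww, hdw, hdw'⟩, fun u hu hcu => ?_⟩
      by_cases huw : u = w
      · exact cfcd hu hw' (by rw [huw]; exact hww) hcu hdw'
      · exact cfcd hu hw huw hcu hdw
  by_cases BAB : ∃ w w', NK a b c d w ∧ NK a b c d w' ∧ w ≠ w' ∧ (E a w ∨ E b w) ∧ (E a w' ∨ E b w')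
  · by_cases BCD : ∃ w w', NK a b c d w ∧ NK a b c d w' ∧ w ≠ w' ∧ (E c w ∨ E d w) ∧ (E c w' ∨ E d w')
    · -- Case 1: both сenters
      rcases bigElimAB BAB with ⟨⟨w1, w2, hw1, hw2, h12, hz1, hz2⟩, hEmp1⟩ |
          ⟨⟨w1, w2, hw1, hw2, h12, hz1, hz2⟩, hEmp1⟩ <;>
        rcases bigElimCD BCD with ⟨⟨v1, v2, hv1, hv2, hv12, hy1, hy2⟩, hEmp2⟩ |
          ⟨⟨v1, v2, hv1, hv2, hv12, hy1, hy2⟩, hEmp2⟩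
      · obtain ⟨w, hw, hwv, hzw⟩ : ∃ w, NK a b c d w ∧ w ≠ v1 ∧ E a w := by
          by_cases hq : w1 = v1
          · exact ⟨w2, hw2, by rw [← hq]; exact h12.symm, hz2⟩
          · exact ⟨w1, hw1, hq, hz1⟩
        exact caseC11 E hsym hne h3 a b c d hab' hac had hbc hbd hcd' F1 w v1 hw hv1 hwv
          hzw hy1 hEmp1 hEmp2
      · obtain ⟨w, hw, hwv, hzw⟩ : ∃ w, NK a b c d w ∧ w ≠ v1 ∧ E a w := by
          by_cases hq : w1 = v1
          · exact ⟨w2, hw2, by rw [← hq]; exact h12.symm, hz2⟩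
          · exact ⟨w1, hw1, hq, hz1⟩
        exact caseC11 E hsym hne h3 a b d c hab' had hac hbd hbc hcd'.symm
          (F1swap34 E F1) w v1 hw.p34 hv1.p34 hwv
          hzw hy1 (fun u hu => hEmp1 u hu.p34) (fun u hu => hEmp2 u hu.p34)
      · obtain ⟨w, hw, hwv, hzw⟩ : ∃ w, NK a b c d w ∧ w ≠ v1 ∧ E b w := by
          by_cases hq : w1 = v1
          · exact ⟨w2, hw2, by rw [← hq]; exact h12.symm, hz2⟩
          · exact ⟨w1, hw1, hq, hz1⟩
        exact caseC11 E hsym hne h3 b a c d hab'.symm hbc hbd hac had hcd'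
          (F1swap12 E F1) w v1 hw.p12 hv1.p12 hwv
          hzw hy1 (fun u hu => hEmp1 u hu.p12) (fun u hu => hEmp2 u hu.p12)
      · obtain ⟨w, hw, hwv, hzw⟩ : ∃ w, NK a b c d w ∧ w ≠ v1 ∧ E b w := by
          by_cases hq : w1 = v1
          · exact ⟨w2, hw2, by rw [← hq]; exact h12.symm, hz2⟩
          · exact ⟨w1, hw1, hq, hz1⟩
        exact caseC11 E hsym hne h3 b a d c hab'.symm hbd hbc had hac hcd'.symm
          (F1swap34 E (F1swap12 E F1)) w v1 (hw.p12.p34) (hv1.p12.p34) hwv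
          hzw hy1 (fun u hu => hEmp1 u (hu.p34.p12)) (fun u hu => hEmp2 u (hu.p34.p12))
    · -- Case 2: big ab, small cd
      have psCD : ∃ w0, ∀ u, NK a b c d u → E c u ∨ E d u → u = w0 := by
        by_cases hex : ∃ u, NK a b c d u ∧ (E c u ∨ E d u)
        · obtain ⟨u0, hu0, hatt0⟩ := hex
          refine ⟨u0, fun u hu hatt => ?_⟩
          by_contra hneu
          exact BCD ⟨u, u0, hu, hu0, hneu, hatt, hatt0⟩
        · exact ⟨a, fun u hu hatt => absurd ⟨u, hu, hatt⟩ hex⟩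
      obtain ⟨w0, psCD⟩ := psCD
      rcases bigElimAB BAB with ⟨⟨w1, w2, hw1, hw2, h12, hz1, hz2⟩, hEmp1⟩ |
          ⟨⟨w1, w2, hw1, hw2, h12, hz1, hz2⟩, hEmp1⟩
      · -- center a
        by_cases hCex : ∃ u, NK a b c d u ∧ E c u
        · obtain ⟨uc, hucNK, hEc⟩ := hCex
          obtain ⟨w, hw, hwne, hzw⟩ : ∃ w, NK a b c d w ∧ w ≠ uc ∧ E a w := by
            by_cases hq : w1 = uc
            · exact ⟨w2, hw2, by rw [← hq]; exact h12.symm, hz2⟩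
            · exact ⟨w1, hw1, hq, hz1⟩
          by_cases hDex : ∃ u, NK a b c d u ∧ E d u
          · have e1 : uc = w0 := psCD uc hucNK (Or.inl hEc)
            obtain ⟨ud, hudNK, hEd⟩ := hDex
            have e2 : ud = w0 := psCD ud hudNK (Or.inr hEd)
            rw [e2, ← e1] at hEd
            exact caseB_both E hsym hne h3 a b c d hab' hac had hbc hbd hcd' F1 w uc hw
              hucNK hwne hzw hEmp1 hEc hEd
              (fun u hu hatt => (psCD u hu hatt).trans e1.symm)
          · exact caseC11 E hsym hne h3 a b c d hab' hac had hbc hbd hcd' F1 w uc hw hucNK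
              hwne hzw hEc hEmp1 (fun u hu hdu => hDex ⟨u, hu, hdu⟩)
        · by_cases hDex : ∃ u, NK a b c d u ∧ E d u
          · obtain ⟨ud, hudNK, hEd⟩ := hDex
            obtain ⟨w, hw, hwne, hzw⟩ : ∃ w, NK a b c d w ∧ w ≠ ud ∧ E a w := by
              by_cases hq : w1 = ud
              · exact ⟨w2, hw2, by rw [← hq]; exact h12.symm, hz2⟩
              · exact ⟨w1, hw1, hq, hz1⟩
            exact caseC11 E hsym hne h3 a b d c hab' had hac hbd hbc hcd'.symm
              (F1swap34 E F1) w ud hw.p34 hudNK.p34 hwne hzw hEd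
              (fun u hu => hEmp1 u hu.p34) (fun u hu hcu => hCex ⟨u, hu.p34, hcu⟩)
          · exact caseB_none E hsym hne h3 a b c d hab' hac had hbc hbd hcd' F1 hEmp1
              (fun u hu hcu => hCex ⟨u, hu, hcu⟩) (fun u hu hdu => hDex ⟨u, hu, hdu⟩)
      · -- center b
        by_cases hCex : ∃ u, NK a b c d u ∧ E c u
        · obtain ⟨uc, hucNK, hEc⟩ := hCex
          obtain ⟨w, hw, hwne, hzw⟩ : ∃ w, NK a b c d w ∧ w ≠ uc ∧ E b w := by
            by_cases hq : w1 = uc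
            · exact ⟨w2, hw2, by rw [← hq]; exact h12.symm, hz2⟩
            · exact ⟨w1, hw1, hq, hz1⟩
          by_cases hDex : ∃ u, NK a b c d u ∧ E d u
          · have e1 : uc = w0 := psCD uc hucNK (Or.inl hEc)
            obtain ⟨ud, hudNK, hEd⟩ := hDex
            have e2 : ud = w0 := psCD ud hudNK (Or.inr hEd)
            rw [e2, ← e1] at hEd
            exact caseB_both E hsym hne h3 b a c d hab'.symm hbc hbd hac had hcd'
              (F1swap12 E F1) w uc hw.p12 hucNK.p12 hwne hzw
              (fun u hu => hEmp1 u hu.p12) hEc hEd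
              (fun u hu hatt => (psCD u hu.p12 hatt).trans e1.symm)
          · exact caseC11 E hsym hne h3 b a c d hab'.symm hbc hbd hac had hcd'
              (F1swap12 E F1) w uc hw.p12 hucNK.p12 hwne hzw hEc
              (fun u hu => hEmp1 u hu.p12) (fun u hu hdu => hDex ⟨u, hu.p12, hdu⟩)
        · by_cases hDex : ∃ u, NK a b c d u ∧ E d u
          · obtain ⟨ud, hudNK, hEd⟩ := hDex
            obtain ⟨w, hw, hwne, hzw⟩ : ∃ w, NK a b c d w ∧ w ≠ ud ∧ E b w := by
              by_cases hq : w1 = ud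
              · exact ⟨w2, hw2, by rw [← hq]; exact h12.symm, hz2⟩
              · exact ⟨w1, hw1, hq, hz1⟩
            exact caseC11 E hsym hne h3 b a d c hab'.symm hbd hbc had hac hcd'.symm
              (F1swap34 E (F1swap12 E F1)) w ud hw.p12.p34 hudNK.p12.p34 hwne hzw hEd
              (fun u hu => hEmp1 u (hu.p34.p12)) (fun u hu hcu => hCex ⟨u, hu.p34.p12, hcu⟩)
          · exact caseB_none E hsym hne h3 b a c d hab'.symm hbc hbd hac had hcd'
              (F1swap12 E F1) (fun u hu => hEmp1 u hu.p12)
              (fun u hu hcu => hCex ⟨u, hu.p12, hcu⟩) (fun u hu hdu => hDex ⟨u, hu.p12, hdu⟩)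
  · by_cases BCD : ∃ w w', NK a b c d w ∧ NK a b c d w' ∧ w ≠ w' ∧ (E c w ∨ E d w) ∧ (E c w' ∨ E d w')
    · -- Case 3: small ab, big cd
      have psAB : ∃ w0, ∀ u, NK a b c d u → E a u ∨ E b u → u = w0 := by
        by_cases hex : ∃ u, NK a b c d u ∧ (E a u ∨ E b u)
        · obtain ⟨u0, hu0, hatt0⟩ := hex
          refine ⟨u0, fun u hu hatt => ?_⟩
          by_contra hneu
          exact BAB ⟨u, u0, hu, hu0, hneu, hatt, hatt0⟩
        · exact ⟨a, fun u hu hatt => absurd ⟨u, hu, hatt⟩ hex⟩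
      obtain ⟨w0, psAB⟩ := psAB
      rcases bigElimCD BCD with ⟨⟨w1, w2, hw1, hw2, h12, hz1, hz2⟩, hEmp1⟩ |
          ⟨⟨w1, w2, hw1, hw2, h12, hz1, hz2⟩, hEmp1⟩
      · -- center c
        by_cases hAex : ∃ u, NK a b c d u ∧ E a u
        · obtain ⟨ua, huaNK, hEa⟩ := hAex
          obtain ⟨w, hw, hwne, hzw⟩ : ∃ w, NK a b c d w ∧ w ≠ ua ∧ E c w := by
            by_cases hq : w1 = ua
            · exact ⟨w2, hw2, by rw [← hq]; exact h12.symm, hz2⟩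
            · exact ⟨w1, hw1, hq, hz1⟩
          by_cases hBex : ∃ u, NK a b c d u ∧ E b u
          · have e1 : ua = w0 := psAB ua huaNK (Or.inl hEa)
            obtain ⟨ub, hubNK, hEb⟩ := hBex
            have e2 : ub = w0 := psAB ub hubNK (Or.inr hEb)
            rw [e2, ← e1] at hEb
            exact caseB_both E hsym hne h3 c d a b hcd' hac.symm hbc.symm had.symm hbd.symm
              hab' (F1pp E F1) w ua hw.pp huaNK.pp hwne hzw
              (fun u hu => hEmp1 u hu.pp) hEa hEb
              (fun u hu hatt => (psAB u hu.pp hatt).trans e1.symm)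
          · exact caseC11 E hsym hne h3 c d a b hcd' hac.symm hbc.symm had.symm hbd.symm hab'
              (F1pp E F1) w ua hw.pp huaNK.pp hwne hzw hEa
              (fun u hu => hEmp1 u hu.pp) (fun u hu hbu => hBex ⟨u, hu.pp, hbu⟩)
        · by_cases hBex : ∃ u, NK a b c d u ∧ E b u
          · obtain ⟨ub, hubNK, hEb⟩ := hBex
            obtain ⟨w, hw, hwne, hzw⟩ : ∃ w, NK a b c d w ∧ w ≠ ub ∧ E c w := by
              by_cases hq : w1 = ub
              · exact ⟨w2, hw2, by rw [← hq]; exact h12.symm, hz2⟩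
              · exact ⟨w1, hw1, hq, hz1⟩
            exact caseC11 E hsym hne h3 c d b a hcd' hbc.symm hac.symm hbd.symm had.symm
              hab'.symm (F1swap34 E (F1pp E F1)) w ub hw.pp.p34 hubNK.pp.p34 hwne hzw hEb
              (fun u hu => hEmp1 u (hu.p34.pp)) (fun u hu hau => hAex ⟨u, hu.p34.pp, hau⟩)
          · exact caseB_none E hsym hne h3 c d a b hcd' hac.symm hbc.symm had.symm hbd.symm
              hab' (F1pp E F1) (fun u hu => hEmp1 u hu.pp)
              (fun u hu hau => hAex ⟨u, hu.pp, hau⟩) (fun u hu hbu => hBex ⟨u, hu.pp, hbu⟩)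
      · -- center d
        by_cases hAex : ∃ u, NK a b c d u ∧ E a u
        · obtain ⟨ua, huaNK, hEa⟩ := hAex
          obtain ⟨w, hw, hwne, hzw⟩ : ∃ w, NK a b c d w ∧ w ≠ ua ∧ E d w := by
            by_cases hq : w1 = ua
            · exact ⟨w2, hw2, by rw [← hq]; exact h12.symm, hz2⟩
            · exact ⟨w1, hw1, hq, hz1⟩
          by_cases hBex : ∃ u, NK a b c d u ∧ E b u
          · have e1 : ua = w0 := psAB ua huaNK (Or.inl hEa)
            obtain ⟨ub, hubNK, hEb⟩ := hBex
            have e2 : ub = w0 := psAB ub hubNK (Or.inr hEb)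
            rw [e2, ← e1] at hEb
            exact caseB_both E hsym hne h3 d c a b hcd'.symm had.symm hbd.symm hac.symm
              hbc.symm hab' (F1swap12 E (F1pp E F1)) w ua hw.pp.p12 huaNK.pp.p12 hwne hzw
              (fun u hu => hEmp1 u (hu.p12.pp)) hEa hEb
              (fun u hu hatt => (psAB u (hu.p12.pp) hatt).trans e1.symm)
          · exact caseC11 E hsym hne h3 d c a b hcd'.symm had.symm hbd.symm hac.symm hbc.symm
              hab' (F1swap12 E (F1pp E F1)) w ua hw.pp.p12 huaNK.pp.p12 hwne hzw hEa
              (fun u hu => hEmp1 u (hu.p12.pp)) (fun u hu hbu => hBex ⟨u, hu.p12.pp, hbu⟩)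
        · by_cases hBex : ∃ u, NK a b c d u ∧ E b u
          · obtain ⟨ub, hubNK, hEb⟩ := hBex
            obtain ⟨w, hw, hwne, hzw⟩ : ∃ w, NK a b c d w ∧ w ≠ ub ∧ E d w := by
              by_cases hq : w1 = ub
              · exact ⟨w2, hw2, by rw [← hq]; exact h12.symm, hz2⟩
              · exact ⟨w1, hw1, hq, hz1⟩
            exact caseC11 E hsym hne h3 d c b a hcd'.symm hbd.symm had.symm hbc.symm hac.symm
              hab'.symm (F1swap34 E (F1swap12 E (F1pp E F1))) w ub hw.pp.p12.p34
              hubNK.pp.p12.p34 hwne hzw hEb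
              (fun u hu => hEmp1 u (hu.p34.p12.pp)) (fun u hu hau => hAex ⟨u, hu.p34.p12.pp, hau⟩)
          · exact caseB_none E hsym hne h3 d c a b hcd'.symm had.symm hbd.symm hac.symm
              hbc.symm hab' (F1swap12 E (F1pp E F1)) (fun u hu => hEmp1 u (hu.p12.pp))
              (fun u hu hau => hAex ⟨u, hu.p12.pp, hau⟩) (fun u hu hbu => hBex ⟨u, hu.p12.pp, hbu⟩)
    · -- Case 4: both small
      have psAB : ∃ w0, ∀ u, NK a b c d u → E a u ∨ E b u → u = w0 := by
        by_cases hex : ∃ u, NK a b c d u ∧ (E a u ∨ E b u)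
        · obtain ⟨u0, hu0, hatt0⟩ := hex
          refine ⟨u0, fun u hu hatt => ?_⟩
          by_contra hneu
          exact BAB ⟨u, u0, hu, hu0, hneu, hatt, hatt0⟩
        · exact ⟨a, fun u hu hatt => absurd ⟨u, hu, hatt⟩ hex⟩
      have psCD : ∃ w0, ∀ u, NK a b c d u → E c u ∨ E d u → u = w0 := by
        by_cases hex : ∃ u, NK a b c d u ∧ (E c u ∨ E d u)
        · obtain ⟨u0, hu0, hatt0⟩ := hex
          refine ⟨u0, fun u hu hatt => ?_⟩
          by_contra hneu
          exact BCD ⟨u, u0, hu, hu0, hneu, hatt, hatt0⟩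
        · exact ⟨a, fun u hu hatt => absurd ⟨u, hu, hatt⟩ hex⟩
      obtain ⟨w1, psAB⟩ := psAB
      obtain ⟨w2, psCD⟩ := psCD
      by_cases hABex : ∃ u, NK a b c d u ∧ (E a u ∨ E b u)
      swap
      · refine caseC5 E hsym hne h3 a b c d F1 w2 ?_
        intro u hu hatt
        rcases hatt with h|h|h|h
        · exact absurd ⟨u, hu, Or.inl h⟩ hABex
        · exact absurd ⟨u, hu, Or.inr h⟩ hABex
        · exact psCD u hu (Or.inl h)
        · exact psCD u hu (Or.inr h)
      obtain ⟨u1, hu1, hatt1⟩ := hABex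
      have e1 : u1 = w1 := psAB u1 hu1 hatt1
      subst e1
      by_cases hCDex : ∃ u, NK a b c d u ∧ (E c u ∨ E d u)
      swap
      · refine caseC5 E hsym hne h3 a b c d F1 u1 ?_
        intro u hu hatt
        rcases hatt with h|h|h|h
        · exact psAB u hu (Or.inl h)
        · exact psAB u hu (Or.inr h)
        · exact absurd ⟨u, hu, Or.inl h⟩ hCDex
        · exact absurd ⟨u, hu, Or.inr h⟩ hCDex
      obtain ⟨u2, hu2, hatt2⟩ := hCDex
      have e2 : u2 = w2 := psCD u2 hu2 hatt2
      subst e2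
      by_cases h12 : u1 = u2
      · refine caseC5 E hsym hne h3 a b c d F1 u1 ?_
        intro u hu hatt
        rcases hatt with h|h|h|h
        · exact psAB u hu (Or.inl h)
        · exact psAB u hu (Or.inr h)
        · rw [psCD u hu (Or.inl h)]; exact h12.symm
        · rw [psCD u hu (Or.inr h)]; exact h12.symm
      · by_cases hAu : E a u1
        · by_cases hBu : E b u1
          · -- both on ab side
            by_cases hCu : E c u2
            · by_cases hDu : E d u2
              · exact caseC22 E hsym hne h3 a b c d hab' hac had hbc hbd hcd' F1 u1 u2
                  hu1 hu2 h12 hAu hBu hCu hDu psAB psCD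
              · have hDemp : ∀ u, NK a b c d u → ¬ E d u :=
                  fun u hu hdu => hDu ((psCD u hu (Or.inr hdu)) ▸ hdu)
                exact caseC21 E hsym hne h3 a b c d hab' hac had hbc hbd hcd' F1 u1 u2
                  hu1 hu2 h12 hAu hBu hCu hDemp psAB
            · have hDu : E d u2 := hatt2.resolve_left hCu
              have hCemp : ∀ u, NK a b c d u → ¬ E c u :=
                fun u hu hcu => hCu ((psCD u hu (Or.inl hcu)) ▸ hcu)
              exact caseC21 E hsym hne h3 a b d c hab' had hac hbd hbc hcd'.symm
                (F1swap34 E F1) u1 u2 hu1.p34 hu2.p34 h12 hAu hBu hDu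
                (fun u hu => hCemp u hu.p34) (fun u hu hatt => psAB u hu.p34 hatt)
          · -- only a on ab side
            have hBemp : ∀ u, NK a b c d u → ¬ E b u :=
              fun u hu hbu => hBu ((psAB u hu (Or.inr hbu)) ▸ hbu)
            by_cases hCu : E c u2
            · by_cases hDu : E d u2
              · exact caseC21 E hsym hne h3 c d a b hcd' hac.symm hbc.symm had.symm hbd.symm
                  hab' (F1pp E F1) u2 u1 hu2.pp hu1.pp (fun e => h12 e.symm) hCu hDu hAu
                  (fun u hu => hBemp u hu.pp) (fun u hu hatt => psCD u hu.pp hatt)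
              · have hDemp : ∀ u, NK a b c d u → ¬ E d u :=
                  fun u hu hdu => hDu ((psCD u hu (Or.inr hdu)) ▸ hdu)
                exact caseC11 E hsym hne h3 a b c d hab' hac had hbc hbd hcd' F1 u1 u2
                  hu1 hu2 h12 hAu hCu hBemp hDemp
            · have hDu : E d u2 := hatt2.resolve_left hCu
              have hCemp : ∀ u, NK a b c d u → ¬ E c u :=
                fun u hu hcu => hCu ((psCD u hu (Or.inl hcu)) ▸ hcu)
              exact caseC11 E hsym hne h3 a b d c hab' had hac hbd hbc hcd'.symm
                (F1swap34 E F1) u1 u2 hu1.p34 hu2.p34 h12 hAu hDu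
                (fun u hu => hBemp u hu.p34) (fun u hu => hCemp u hu.p34)
        · have hBu : E b u1 := hatt1.resolve_left hAu
          have hAemp : ∀ u, NK a b c d u → ¬ E a u :=
            fun u hu hau => hAu ((psAB u hu (Or.inl hau)) ▸ hau)
          by_cases hCu : E c u2
          · by_cases hDu : E d u2
            · exact caseC21 E hsym hne h3 c d b a hcd' hbc.symm hac.symm hbd.symm had.symm
                hab'.symm (F1swap34 E (F1pp E F1)) u2 u1 hu2.pp.p34 hu1.pp.p34
                (fun e => h12 e.symm) hCu hDu hBu
                (fun u hu => hAemp u (hu.p34.pp)) (fun u hu hatt => psCD u (hu.p34.pp) hatt)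
            · have hDemp : ∀ u, NK a b c d u → ¬ E d u :=
                fun u hu hdu => hDu ((psCD u hu (Or.inr hdu)) ▸ hdu)
              exact caseC11 E hsym hne h3 b a c d hab'.symm hbc hbd hac had hcd'
                (F1swap12 E F1) u1 u2 hu1.p12 hu2.p12 h12 hBu hCu
                (fun u hu => hAemp u hu.p12) (fun u hu => hDemp u hu.p12)
          · have hDu : E d u2 := hatt2.resolve_left hCu
            have hCemp : ∀ u, NK a b c d u → ¬ E c u :=
              fun u hu hcu => hCu ((psCD u hu (Or.inl hcu)) ▸ hcu)
            exact caseC11 E hsym hne h3 b a d c hab'.symm hbd hbc had hac hcd'.symm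
              (F1swap34 E (F1swap12 E F1)) u1 u2 hu1.p12.p34 hu2.p12.p34 h12 hBu hDu
              (fun u hu => hAemp u (hu.p34.p12)) (fun u hu => hCemp u (hu.p34.p12))

end Glue

end AFLaux

lemma disj_of_cross {α : Type*} [DecidableEq α] {x1 y1 x2 y2 : α}
    (h : AFLaux.Cross x1 y1 x2 y2) : Disjoint ({x1, y1} : Finset α) {x2, y2} := by
  obtain ⟨h1, h2, h3, h4⟩ := h
  rw [Finset.disjoint_left]
  intro u hu hv
  simp only [Finset.mem_insert, Finset.mem_singleton] at hu hv
  rcases hu with rfl|rfl <;> rcases hv with rfl|rfl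
  exacts [h1 rfl, h2 rfl, h3 rfl, h4 rfl]

theorem AFL_t3_k3_r2 (χ : Finset (Fin 10) → Fin 3) :
    ∃ e₁ e₂ e₃ : Finset (Fin 10),
      e₁.card = 2 ∧ e₂.card = 2 ∧ e₃.card = 2 ∧
      Disjoint e₁ e₂ ∧ Disjoint e₁ e₃ ∧ Disjoint e₂ e₃ ∧
      χ e₁ = χ e₂ ∧ χ e₂ = χ e₃ := by
  by_contra hcon
  have main : ∀ i : Fin 3, AFLaux.KeyGoal (fun x y : Fin 10 => x ≠ y ∧ χ {x, y} = i) := by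
    intro i
    refine AFLaux.key _ (fun x y h => ⟨h.1.symm, by rw [Finset.pair_comm]; exact h.2⟩)
      (fun x y h => h.1) ?_
    intro x1 y1 x2 y2 x3 y3 h1 h2 h3 c12 c13 c23
    exact hcon ⟨{x1, y1}, {x2, y2}, {x3, y3}, Finset.card_pair h1.1, Finset.card_pair h2.1,
      Finset.card_pair h3.1, disj_of_cross c12, disj_of_cross c13, disj_of_cross c23,
      h1.2.trans h2.2.symm, h2.2.trans h3.2.symm⟩
  obtain ⟨C0, X0, Y0, hb0, hc0⟩ := main 0
  obtain ⟨C1, X1, Y1, hb1, hc1⟩ := main 1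
  obtain ⟨C2, X2, Y2, hb2, hc2⟩ := main 2
  have hsubset : Finset.powersetCard 2 (C0 ∪ C1 ∪ C2)ᶜ ⊆
      (Finset.powersetCard 2 X0 ∪ Finset.powersetCard 2 Y0 ∪ Finset.powersetCard 2 X1 ∪
       Finset.powersetCard 2 Y1 ∪ Finset.powersetCard 2 X2 ∪ Finset.powersetCard 2 Y2) := by
    intro p hp
    rw [Finset.mem_powersetCard] at hp
    obtain ⟨hpsub, hpcard⟩ := hp
    obtain ⟨x, y, hxy, rfl⟩ := Finset.card_eq_two.mp hpcard
    have hxB : x ∉ C0 ∪ C1 ∪ C2 := by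
      have := hpsub (Finset.mem_insert_self x {y})
      rwa [Finset.mem_compl] at this
    have hyB : y ∉ C0 ∪ C1 ∪ C2 := by
      have := hpsub (by simp : y ∈ ({x, y} : Finset (Fin 10)))
      rwa [Finset.mem_compl] at this
    have hx0 : x ∉ C0 := fun h => hxB (Finset.mem_union_left _ (Finset.mem_union_left _ h))
    have hx1 : x ∉ C1 := fun h => hxB (Finset.mem_union_left _ (Finset.mem_union_right _ h))
    have hx2 : x ∉ C2 := fun h => hxB (Finset.mem_union_right _ h)
    have hy0 : y ∉ C0 := fun h => hyB (Finset.mem_union_left _ (Finset.mem_union_left _ h))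
    have hy1 : y ∉ C1 := fun h => hyB (Finset.mem_union_left _ (Finset.mem_union_right _ h))
    have hy2 : y ∉ C2 := fun h => hyB (Finset.mem_union_right _ h)
    have hsub2 : ∀ {S : Finset (Fin 10)}, x ∈ S → y ∈ S → ({x, y} : Finset (Fin 10)) ⊆ S := by
      intro S hx hy z hz
      simp only [Finset.mem_insert, Finset.mem_singleton] at hz
      rcases hz with rfl|rfl
      exacts [hx, hy]
    have trich : χ {x, y} = 0 ∨ χ {x, y} = 1 ∨ χ {x, y} = 2 := by
      have h : ∀ j : Fin 3, j = 0 ∨ j = 1 ∨ j = 2 := by decide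
      exact h _
    simp only [Finset.mem_union, Finset.mem_powersetCard]
    rcases trich with h|h|h
    · rcases hc0 ⟨hxy, h⟩ with hc|hc|⟨hcx, hcy⟩|⟨hcx, hcy⟩
      · exact absurd hc hx0
      · exact absurd hc hy0
      · exact Or.inl (Or.inl (Or.inl (Or.inl (Or.inl ⟨hsub2 hcx hcy, hpcard⟩))))
      · exact Or.inl (Or.inl (Or.inl (Or.inl (Or.inr ⟨hsub2 hcx hcy, hpcard⟩))))
    · rcases hc1 ⟨hxy, h⟩ with hc|hc|⟨hcx, hcy⟩|⟨hcx, hcy⟩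
      · exact absurd hc hx1
      · exact absurd hc hy1
      · exact Or.inl (Or.inl (Or.inl (Or.inr ⟨hsub2 hcx hcy, hpcard⟩)))
      · exact Or.inl (Or.inl (Or.inr ⟨hsub2 hcx hcy, hpcard⟩))
    · rcases hc2 ⟨hxy, h⟩ with hc|hc|⟨hcx, hcy⟩|⟨hcx, hcy⟩
      · exact absurd hc hx2
      · exact absurd hc hy2
      · exact Or.inl (Or.inr ⟨hsub2 hcx hcy, hpcard⟩)
      · exact Or.inr ⟨hsub2 hcx hcy, hpcard⟩
  have hcard : ((C0 ∪ C1 ∪ C2)ᶜ.card).choose 2 ≤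
      X0.card.choose 2 + Y0.card.choose 2 + X1.card.choose 2 + Y1.card.choose 2 +
      X2.card.choose 2 + Y2.card.choose 2 := by
    have h1 := Finset.card_le_card hsubset
    rw [Finset.card_powersetCard] at h1
    refine le_trans h1 (le_trans (Finset.card_union_le _ _) ?_)
    refine le_trans (Nat.add_le_add_right (Finset.card_union_le _ _) _) ?_
    refine le_trans (Nat.add_le_add_right (Nat.add_le_add_right (Finset.card_union_le _ _) _) _) ?_
    refine le_trans (Nat.add_le_add_right (Nat.add_le_add_right (Nat.add_le_add_right
      (Finset.card_union_le _ _) _) _) _) ?_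
    refine le_trans (Nat.add_le_add_right (Nat.add_le_add_right (Nat.add_le_add_right
      (Nat.add_le_add_right (Finset.card_union_le _ _) _) _) _) _) ?_
    simp only [Finset.card_powersetCard]
    omega
  have hcle : ∀ S : Finset (Fin 10), S.card ≤ 10 := fun S =>
    le_trans (Finset.card_le_univ S) (by simp)
  have hBc : (C0 ∪ C1 ∪ C2)ᶜ.card = 10 - (C0 ∪ C1 ∪ C2).card := by
    rw [Finset.card_compl]; simp
  have hBle : (C0 ∪ C1 ∪ C2).card ≤ C0.card + C1.card + C2.card :=
    le_trans (Finset.card_union_le _ _) (Nat.add_le_add_right (Finset.card_union_le _ _) _)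
  have hmono : ((10 - (C0.card + C1.card + C2.card)).choose 2) ≤
      (((C0 ∪ C1 ∪ C2)ᶜ).card).choose 2 := Nat.choose_le_choose 2 (by omega)
  have key1 : ∀ c < 3, ∀ x < 11, ∀ y < 11, c + x / 2 + y / 2 ≤ 2 →
      Nat.choose x 2 + Nat.choose y 2 ≤ (if c = 0 then 10 else if c = 1 then 3 else 0) := by
    decide
  have key2 : ∀ c0 < 3, ∀ c1 < 3, ∀ c2 < 3,
      ((if c0 = 0 then 10 else if c0 = 1 then 3 else 0) +
       (if c1 = 0 then 10 else if c1 = 1 then 3 else 0) +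
       (if c2 = 0 then 10 else if c2 = 1 then 3 else 0) : ℕ) <
        Nat.choose (10 - (c0 + c1 + c2)) 2 := by
    decide
  have b0 := key1 C0.card (by omega) X0.card (by have := hcle X0; omega)
    Y0.card (by have := hcle Y0; omega) hb0
  have b1 := key1 C1.card (by omega) X1.card (by have := hcle X1; omega)
    Y1.card (by have := hcle Y1; omega) hb1
  have b2 := key1 C2.card (by omega) X2.card (by have := hcle X2; omega)
    Y2.card (by have := hcle Y2; omega) hb2
  have final := key2 C0.card (by omega) C1.card (by omega) C2.card (by omega)
  linarith [hcard, hmono, b0, b1, b2, final]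
end

section
/- Let H be a 3-coloring of the 3-subsets of a 12-element set V with no 2-colored perfect matching. Suppose M = {e₁, e₂, e₃} consists of three pairwise disjoint 2-element subsets of V, and that every 3-subset of V containing some eᵢ has color c₁ or c₂ (c₁ ≠ c₂ among the three colors). Then every 3-subset of V \ (e₁ ∪ e₂ ∪ e₃) has the third color c₃. -/
/-- `M` is a perfect matching of the complete 3-uniform hypergraph on 12 vertices
using at most two of the three colors under the coloring `χ`. -/
def TwoColoredPerfectMatching (χ : Finset (Fin 12) → Fin 3)
    (M : Finset (Finset (Fin 12))) : Prop :=
  M.card = 4 ∧ (∀ e ∈ M, e.card = 3) ∧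
    (∀ e ∈ M, ∀ f ∈ M, e ≠ f → Disjoint e f) ∧
    (∀ v : Fin 12, ∃ e ∈ M, v ∈ e) ∧
    ∃ c₁ c₂ : Fin 3, ∀ e ∈ M, χ e = c₁ ∨ χ e = c₂

/-- `B` is a B-set: a 6-element set such that some color is avoided by all of its
3-subsets and no two disjoint 3-subsets of `B` receive the same color. -/
def IsBSet (χ : Finset (Fin 12) → Fin 3) (B : Finset (Fin 12)) : Prop :=
  B.card = 6 ∧
    (∃ c : Fin 3, ∀ e ⊆ B, e.card = 3 → χ e ≠ c) ∧
    ∀ e ⊆ B, ∀ f ⊆ B, e.card = 3 → f.card = 3 → Disjoint e f → χ e ≠ χ f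

theorem complement_of_pair_matching_is_monochromatic (χ : Finset (Fin 12) → Fin 3)
    (hH : ¬ ∃ M, TwoColoredPerfectMatching χ M)
    (e₁ e₂ e₃ : Finset (Fin 12)) (c₁ c₂ c₃ : Fin 3)
    (he₁ : e₁.card = 2) (he₂ : e₂.card = 2) (he₃ : e₃.card = 2)
    (hd₁₂ : Disjoint e₁ e₂) (hd₁₃ : Disjoint e₁ e₃) (hd₂₃ : Disjoint e₂ e₃)
    (hc₁₂ : c₁ ≠ c₂) (hc₁₃ : c₃ ≠ c₁) (hc₂₃ : c₃ ≠ c₂)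
    (hpairs : ∀ f : Finset (Fin 12), f.card = 3 →
      (e₁ ⊆ f ∨ e₂ ⊆ f ∨ e₃ ⊆ f) → χ f = c₁ ∨ χ f = c₂) :
    ∀ f ⊆ (e₁ ∪ e₂ ∪ e₃)ᶜ, f.card = 3 → χ f = c₃ := by
  intro f hf hfcard
  by_contra hne
  -- χ f is c₁ or c₂
  have hχf : χ f = c₁ ∨ χ f = c₂ := by
    have h1 := c₁.isLt; have h2 := c₂.isLt; have h3 := c₃.isLt
    have h4 := (χ f).isLt
    have e12 : c₁.val ≠ c₂.val := fun h => hc₁₂ (Fin.ext h)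
    have e31 : c₃.val ≠ c₁.val := fun h => hc₁₃ (Fin.ext h)
    have e32 : c₃.val ≠ c₂.val := fun h => hc₂₃ (Fin.ext h)
    have ef : (χ f).val ≠ c₃.val := fun h => hne (Fin.ext h)
    have : (χ f).val = c₁.val ∨ (χ f).val = c₂.val := by omega
    rcases this with h | h
    · exact Or.inl (Fin.ext h)
    · exact Or.inr (Fin.ext h)
  -- the complement has 6 elements
  have hdU : Disjoint (e₁ ∪ e₂) e₃ := Finset.disjoint_union_left.mpr ⟨hd₁₃, hd₂₃⟩
  have hUcard : (e₁ ∪ e₂ ∪ e₃).card = 6 := by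
    rw [Finset.card_union_of_disjoint hdU, Finset.card_union_of_disjoint hd₁₂,
      he₁, he₂, he₃]
  have hCcard : (e₁ ∪ e₂ ∪ e₃)ᶜ.card = 6 := by
    rw [Finset.card_compl, hUcard]; rfl
  set R : Finset (Fin 12) := (e₁ ∪ e₂ ∪ e₃)ᶜ \ f with hR
  have hRcard : R.card = 3 := by
    rw [hR, Finset.card_sdiff_of_subset hf, hCcard, hfcard]
  obtain ⟨x, y, z, hxy, hxz, hyz, hRxyz⟩ := Finset.card_eq_three.mp hRcard
  have hxR : x ∈ R := by rw [hRxyz]; simp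
  have hyR : y ∈ R := by rw [hRxyz]; simp
  have hzR : z ∈ R := by rw [hRxyz]; simp
  have hmemC : ∀ w ∈ R, w ∉ e₁ ∧ w ∉ e₂ ∧ w ∉ e₃ ∧ w ∉ f := by
    intro w hw
    rw [hR, Finset.mem_sdiff, Finset.mem_compl] at hw
    simp only [Finset.mem_union, not_or] at hw
    exact ⟨hw.1.1.1, hw.1.1.2, hw.1.2, hw.2⟩
  obtain ⟨hx1, hx2, hx3, hxf⟩ := hmemC x hxR
  obtain ⟨hy1, hy2, hy3, hyf⟩ := hmemC y hyR
  obtain ⟨hz1, hz2, hz3, hzf⟩ := hmemC z hzR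
  have hfC : ∀ w ∈ f, w ∉ e₁ ∧ w ∉ e₂ ∧ w ∉ e₃ := by
    intro w hw
    have := hf hw
    rw [Finset.mem_compl] at this
    simp only [Finset.mem_union, not_or] at this
    exact ⟨this.1.1, this.1.2, this.2⟩
  set g₁ := insert x e₁ with hg₁
  set g₂ := insert y e₂ with hg₂
  set g₃ := insert z e₃ with hg₃
  have hg₁c : g₁.card = 3 := by rw [hg₁, Finset.card_insert_of_notMem hx1, he₁]
  have hg₂c : g₂.card = 3 := by rw [hg₂, Finset.card_insert_of_notMem hy2, he₂]
  have hg₃c : g₃.card = 3 := by rw [hg₃, Finset.card_insert_of_notMem hz3, he₃]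
  -- disjointness facts
  have hd : ∀ (a : Fin 12) (ea eb : Finset (Fin 12)) (b : Fin 12),
      a ≠ b → a ∉ eb → b ∉ ea → Disjoint ea eb →
      Disjoint (insert a ea) (insert b eb) := by
    intro a ea eb b hab haeb hbea hdis
    rw [Finset.disjoint_left]
    intro w hw hw'
    rcases Finset.mem_insert.mp hw with rfl | hw
    · rcases Finset.mem_insert.mp hw' with h | h
      · exact hab h
      · exact haeb h
    · rcases Finset.mem_insert.mp hw' with rfl | h
      · exact hbea hw
      · exact (Finset.disjoint_left.mp hdis hw) h
  have hdg₁₂ : Disjoint g₁ g₂ := hd x e₁ e₂ y hxy hx2 hy1 hd₁₂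
  have hdg₁₃ : Disjoint g₁ g₃ := hd x e₁ e₃ z hxz hx3 hz1 hd₁₃
  have hdg₂₃ : Disjoint g₂ g₃ := hd y e₂ e₃ z hyz hy3 hz2 hd₂₃
  have hdgf : ∀ (a : Fin 12) (ea : Finset (Fin 12)), a ∉ f →
      (∀ w ∈ ea, w ∉ f) → Disjoint (insert a ea) f := by
    intro a ea haf hea
    rw [Finset.disjoint_left]
    intro w hw hwf
    rcases Finset.mem_insert.mp hw with rfl | hw
    · exact haf hwf
    · exact hea w hw hwf
  have hdg₁f : Disjoint g₁ f := hdgf x e₁ hxf fun w hw hwf => (hfC w hwf).1 hw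
  have hdg₂f : Disjoint g₂ f := hdgf y e₂ hyf fun w hw hwf => (hfC w hwf).2.1 hw
  have hdg₃f : Disjoint g₃ f := hdgf z e₃ hzf fun w hw hwf => (hfC w hwf).2.2 hw
  -- the four sets are pairwise distinct
  have hne' : ∀ (a b : Finset (Fin 12)), a.card = 3 → Disjoint a b → a ≠ b := by
    intro a b hac hab h
    subst h
    rw [disjoint_self] at hab
    simp [hab] at hac
  have n12 := hne' g₁ g₂ hg₁c hdg₁₂
  have n13 := hne' g₁ g₃ hg₁c hdg₁₃
  have n23 := hne' g₂ g₃ hg₂c hdg₂₃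
  have n1f := hne' g₁ f hg₁c hdg₁f
  have n2f := hne' g₂ f hg₂c hdg₂f
  have n3f := hne' g₃ f hg₃c hdg₃f
  set M : Finset (Finset (Fin 12)) := {g₁, g₂, g₃, f} with hM
  apply hH
  refine ⟨M, ?_, ?_, ?_, ?_, c₁, c₂, ?_⟩
  · rw [hM]
    rw [Finset.card_insert_of_notMem (by simp [n12, n13, n1f]),
      Finset.card_insert_of_notMem (by simp [n23, n2f]),
      Finset.card_insert_of_notMem (by simp [n3f]), Finset.card_singleton]
  · intro e he
    rw [hM] at he
    simp only [Finset.mem_insert, Finset.mem_singleton] at he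
    rcases he with rfl | rfl | rfl | rfl
    exacts [hg₁c, hg₂c, hg₃c, hfcard]
  · intro e he e' he' hee'
    rw [hM] at he he'
    simp only [Finset.mem_insert, Finset.mem_singleton] at he he'
    rcases he with rfl | rfl | rfl | rfl <;> rcases he' with rfl | rfl | rfl | rfl <;>
      first
      | exact absurd rfl hee'
      | assumption
      | (exact hdg₁₂.symm) | (exact hdg₁₃.symm) | (exact hdg₂₃.symm)
      | (exact hdg₁f.symm) | (exact hdg₂f.symm) | (exact hdg₃f.symm)
  · intro v
    by_cases hv : v ∈ e₁ ∪ e₂ ∪ e₃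
    · simp only [Finset.mem_union] at hv
      rcases hv with (hv | hv) | hv
      · exact ⟨g₁, by simp [hM], by simp [hg₁, hv]⟩
      · exact ⟨g₂, by simp [hM], by simp [hg₂, hv]⟩
      · exact ⟨g₃, by simp [hM], by simp [hg₃, hv]⟩
    · have hvC : v ∈ (e₁ ∪ e₂ ∪ e₃)ᶜ := Finset.mem_compl.mpr hv
      by_cases hvf : v ∈ f
      · exact ⟨f, by simp [hM], hvf⟩
      · have hvR : v ∈ R := by rw [hR]; exact Finset.mem_sdiff.mpr ⟨hvC, hvf⟩
        rw [hRxyz] at hvR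
        simp only [Finset.mem_insert, Finset.mem_singleton] at hvR
        rcases hvR with rfl | rfl | rfl
        · exact ⟨g₁, by simp [hM], by simp [hg₁]⟩
        · exact ⟨g₂, by simp [hM], by simp [hg₂]⟩
        · exact ⟨g₃, by simp [hM], by simp [hg₃]⟩
  · intro e he
    rw [hM] at he
    simp only [Finset.mem_insert, Finset.mem_singleton] at he
    rcases he with rfl | rfl | rfl | rfl
    · exact hpairs g₁ hg₁c (Or.inl (Finset.subset_insert _ _))
    · exact hpairs g₂ hg₂c (Or.inr (Or.inl (Finset.subset_insert _ _)))
    · exact hpairs g₃ hg₃c (Or.inr (Or.inr (Finset.subset_insert _ _)))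
    · exact hχf
end

section
/- Let H be a 3-colored hypergraph on 12 vertices whose edges are 3-subsets, with no 2-colored perfect matching of size 4. Suppose Y is one side of a balanced partition of the vertex set into two 6-element sides Y and Z, and Y supports two perfect matchings M₁ and M₂ (each a pair of disjoint 3-subsets covering Y), where M₁ uses only colors c₁ and c₂ with both appearing, and M₂ uses only colors c₂ and c₃ with both appearing. Then every perfect matching of the other 6-element side Z uses exactly colors c₁ and c₃, i.e., Z is a B-set avoiding color c₂. -/
theorem other_side_is_B_set_avoiding_middle_color (χ : Finset (Fin 12) → Fin 3)
    (c₁ c₂ c₃ : Fin 3) (hc₁₂ : c₁ ≠ c₂) (hc₁₃ : c₁ ≠ c₃) (hc₂₃ : c₂ ≠ c₃)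
    (hH : ¬ ∃ M, TwoColoredPerfectMatching χ M)
    (Y Z : Finset (Fin 12)) (hY : Y.card = 6) (hZ : Z.card = 6)
    (hdisj : Disjoint Y Z) (hcover : Y ∪ Z = Finset.univ)
    (a₁ a₂ : Finset (Fin 12))
    (ha₁ : a₁.card = 3) (ha₂ : a₂.card = 3) (hadisj : Disjoint a₁ a₂)
    (haY : a₁ ∪ a₂ = Y) (haχ₁ : χ a₁ = c₁) (haχ₂ : χ a₂ = c₂)
    (b₁ b₂ : Finset (Fin 12))
    (hb₁ : b₁.card = 3) (hb₂ : b₂.card = 3) (hbdisj : Disjoint b₁ b₂)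
    (hbY : b₁ ∪ b₂ = Y) (hbχ₁ : χ b₁ = c₂) (hbχ₂ : χ b₂ = c₃) :
    ∀ e f : Finset (Fin 12), e.card = 3 → f.card = 3 → Disjoint e f →
      e ∪ f = Z → ((χ e = c₁ ∧ χ f = c₃) ∨ (χ e = c₃ ∧ χ f = c₁)) := by
  intro e f he hf hef hefZ
  have heZ : e ⊆ Z := hefZ ▸ Finset.subset_union_left
  have hfZ : f ⊆ Z := hefZ ▸ Finset.subset_union_right
  have key : ∀ u₁ u₂ : Finset (Fin 12), u₁.card = 3 → u₂.card = 3 →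
      Disjoint u₁ u₂ → u₁ ∪ u₂ = Y →
      ¬((χ e = χ u₁ ∨ χ e = χ u₂) ∧ (χ f = χ u₁ ∨ χ f = χ u₂)) := by
    rintro u₁ u₂ hu₁ hu₂ hud huY ⟨hce, hcf⟩
    apply hH
    have hu₁Y : u₁ ⊆ Y := huY ▸ Finset.subset_union_left
    have hu₂Y : u₂ ⊆ Y := huY ▸ Finset.subset_union_right
    have hne : ∀ s t : Finset (Fin 12), s.card = 3 → Disjoint s t → s ≠ t := by
      rintro s t hs hd rfl
      rw [disjoint_self, Finset.bot_eq_empty] at hd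
      simp [hd] at hs
    have d1e : Disjoint u₁ e := hdisj.mono hu₁Y heZ
    have d1f : Disjoint u₁ f := hdisj.mono hu₁Y hfZ
    have d2e : Disjoint u₂ e := hdisj.mono hu₂Y heZ
    have d2f : Disjoint u₂ f := hdisj.mono hu₂Y hfZ
    have n12 := hne _ _ hu₁ hud
    have n1e := hne _ _ hu₁ d1e
    have n1f := hne _ _ hu₁ d1f
    have n2e := hne _ _ hu₂ d2e
    have n2f := hne _ _ hu₂ d2f
    have nef := hne _ _ he hef
    refine ⟨{u₁, u₂, e, f}, ?_, ?_, ?_, ?_, χ u₁, χ u₂, ?_⟩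
    · rw [Finset.card_insert_of_notMem (by simp [n12, n1e, n1f]),
        Finset.card_insert_of_notMem (by simp [n2e, n2f]),
        Finset.card_insert_of_notMem (by simp [nef]), Finset.card_singleton]
    · intro g hg
      simp only [Finset.mem_insert, Finset.mem_singleton] at hg
      rcases hg with rfl | rfl | rfl | rfl <;> assumption
    · intro g hg g' hg' hgg'
      simp only [Finset.mem_insert, Finset.mem_singleton] at hg hg'
      rcases hg with rfl | rfl | rfl | rfl <;> rcases hg' with rfl | rfl | rfl | rfl <;>
        first
          | exact absurd rfl hgg'
          | assumption
          | exact hud.symm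
          | exact d1e.symm
          | exact d1f.symm
          | exact d2e.symm
          | exact d2f.symm
          | exact hef.symm
    · intro v
      have hv : v ∈ Y ∪ Z := by rw [hcover]; exact Finset.mem_univ v
      rw [← huY, ← hefZ] at hv
      simp only [Finset.mem_union] at hv
      rcases hv with (hv | hv) | (hv | hv)
      · exact ⟨u₁, by simp, hv⟩
      · exact ⟨u₂, by simp, hv⟩
      · exact ⟨e, by simp, hv⟩
      · exact ⟨f, by simp, hv⟩
    · intro g hg
      simp only [Finset.mem_insert, Finset.mem_singleton] at hg
      rcases hg with rfl | rfl | rfl | rfl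
      · exact Or.inl rfl
      · exact Or.inr rfl
      · exact hce
      · exact hcf
  have K1 := key a₁ a₂ ha₁ ha₂ hadisj haY
  have K2 := key b₁ b₂ hb₁ hb₂ hbdisj hbY
  rw [haχ₁, haχ₂] at K1
  rw [hbχ₁, hbχ₂] at K2
  have fin3 : ∀ x : Fin 3, x = c₁ ∨ x = c₂ ∨ x = c₃ := by
    intro x
    simp only [Fin.ext_iff] at *
    omega
  rcases fin3 (χ e) with h1 | h1 | h1 <;> rcases fin3 (χ f) with h2 | h2 | h2 <;>
    simp_all <;> tauto
end
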